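/- arXiv:2412.19299 — 4 statements merged into one kernel-verified Lean document; each statement's English description precedes it below -/
import Mathlib

section
/- Let z ∈ ℝᴺ and let ŵ ∈ ℝᴺ be a probability vector with strictly positive entries. Define z̄ = Σᵢ ŵᵢ zᵢ and s = Σᵢ ŵᵢ (zᵢ − z̄)². Then for any probability vector w ∈ ℝᴺ satisfying Σᵢ (wᵢ − ŵᵢ)²/ŵᵢ ≤ λ², one has wᵀz ≤ z̄ + λ√s. -/
/-- worst-case expectation over a modified χ² ball is bounded by
mean plus `λ` times the standard deviation. -/
theorem chisq_upper_bound {N : ℕ} (z wh : Fin N → ℝ) (lam : ℝ)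
    (hlam : 0 ≤ lam)
    (hwhpos : ∀ i, 0 < wh i) (hwhsum : ∑ i, wh i = 1)
    (w : Fin N → ℝ) (hw : ∀ i, 0 ≤ w i) (hwsum : ∑ i, w i = 1)
    (hball : ∑ i, (w i - wh i) ^ 2 / wh i ≤ lam ^ 2) :
    ∑ i, w i * z i ≤
      (∑ i, wh i * z i) +
        lam * Real.sqrt (∑ i, wh i * (z i - ∑ j, wh j * z j) ^ 2) := by
  set zb := ∑ j, wh j * z j with hzb
  have key : ∑ i, w i * z i - ∑ i, wh i * z i
      = ∑ i, (w i - wh i) * (z i - zb) := by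
    have h1 : ∑ i, (w i - wh i) * (z i - zb)
        = ∑ i, (w i * z i - wh i * z i) - (∑ i, (w i - wh i)) * zb := by
      rw [Finset.sum_mul]
      rw [← Finset.sum_sub_distrib]
      congr 1; ext i; ring
    rw [h1]
    have h0 : ∑ i, (w i - wh i) = 0 := by
      rw [Finset.sum_sub_distrib, hwsum, hwhsum]; ring
    rw [h0, Finset.sum_sub_distrib]; ring
  set f : Fin N → ℝ := fun i => (w i - wh i) / Real.sqrt (wh i)
  set g : Fin N → ℝ := fun i => Real.sqrt (wh i) * (z i - zb)
  have hfg : ∀ i, f i * g i = (w i - wh i) * (z i - zb) := by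
    intro i
    have : Real.sqrt (wh i) ≠ 0 := ne_of_gt (Real.sqrt_pos.mpr (hwhpos i))
    simp only [f, g]; field_simp
  have hf2 : ∑ i, f i ^ 2 = ∑ i, (w i - wh i) ^ 2 / wh i := by
    apply Finset.sum_congr rfl; intro i _
    rw [div_pow, Real.sq_sqrt (hwhpos i).le]
  have hg2 : ∑ i, g i ^ 2 = ∑ i, wh i * (z i - zb) ^ 2 := by
    apply Finset.sum_congr rfl; intro i _
    rw [mul_pow, Real.sq_sqrt (hwhpos i).le]
  have hCS' : ∑ i, (w i - wh i) * (z i - zb)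
      ≤ Real.sqrt (∑ i, (w i - wh i) ^ 2 / wh i) *
        Real.sqrt (∑ i, wh i * (z i - zb) ^ 2) := by
    calc ∑ i, (w i - wh i) * (z i - zb) = ∑ i, f i * g i := by
          simp_rw [hfg]
      _ ≤ Real.sqrt (∑ i, f i ^ 2) * Real.sqrt (∑ i, g i ^ 2) := by
          have := Finset.sum_mul_sq_le_sq_mul_sq Finset.univ f g
          have hA : (0:ℝ) ≤ ∑ i, f i ^ 2 := Finset.sum_nonneg fun i _ => sq_nonneg _
          have h2 := Real.sqrt_le_sqrt this
          rw [Real.sqrt_sq_eq_abs, Real.sqrt_mul hA] at h2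
          exact le_trans (le_abs_self _) h2
      _ = _ := by rw [hf2, hg2]
  have hsqrt : Real.sqrt (∑ i, (w i - wh i) ^ 2 / wh i) ≤ lam := by
    rw [show lam = Real.sqrt (lam ^ 2) by rw [Real.sqrt_sq hlam]]
    exact Real.sqrt_le_sqrt hball
  have hsnn : 0 ≤ Real.sqrt (∑ i, wh i * (z i - zb) ^ 2) := Real.sqrt_nonneg _
  nlinarith [mul_le_mul_of_nonneg_right hsqrt hsnn]
end

section
/- Let z ∈ ℝᴺ and let ŵ ∈ ℝᴺ be a probability vector with strictly positive entries. Define z̄ = Σᵢ ŵᵢ zᵢ, s = Σᵢ ŵᵢ (zᵢ − z̄)², and let U ≥ max_i |zᵢ − z̄|. If λ ≥ 0 and s ≥ λ²U², then the vector w with wᵢ = ŵᵢ + λ ŵᵢ (zᵢ − z̄)/√s is a probability vector (wᵢ ≥ 0 and Σᵢ wᵢ = 1), satisfies Σᵢ (wᵢ − ŵᵢ)²/ŵᵢ ≤ λ², and achieves wᵀz = z̄ + λ√s. -/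
/-- the worst-case distribution attaining `z̄ + λ√s` within the
modified χ² ambiguity ball of radius `λ`. -/
theorem chisq_worst_case_attained {N : ℕ} (z wh : Fin N → ℝ) (lam U : ℝ)
    (hlam : 0 ≤ lam)
    (hwhpos : ∀ i, 0 < wh i) (hwhsum : ∑ i, wh i = 1)
    (zbar s : ℝ)
    (hzbar : zbar = ∑ i, wh i * z i)
    (hs : s = ∑ i, wh i * (z i - zbar) ^ 2)
    (hU : ∀ i, |z i - zbar| ≤ U)
    (hsU : lam ^ 2 * U ^ 2 ≤ s)
    (w : Fin N → ℝ)
    (hwdef : ∀ i, w i = wh i + lam * wh i * (z i - zbar) / Real.sqrt s) :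
    (∀ i, 0 ≤ w i) ∧ (∑ i, w i = 1) ∧
      (∑ i, (w i - wh i) ^ 2 / wh i ≤ lam ^ 2) ∧
      (∑ i, w i * z i = zbar + lam * Real.sqrt s) := by
  have hs0 : 0 ≤ s := le_trans (by positivity) hsU
  -- centered first moment is zero
  have hA : ∑ i, wh i * (z i - zbar) = 0 := by
    have h1 : ∑ i, wh i * (z i - zbar)
        = (∑ i, wh i * z i) - (∑ i, wh i) * zbar := by
      rw [Finset.sum_mul, ← Finset.sum_sub_distrib]
      exact Finset.sum_congr rfl fun i _ => by ring
    rw [h1, hwhsum, ← hzbar]; ring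
  have hS2 : ∑ i, wh i * (z i - zbar) * z i = s := by
    have h1 : ∑ i, wh i * (z i - zbar) * z i
        = (∑ i, wh i * (z i - zbar) ^ 2) + (∑ i, wh i * (z i - zbar)) * zbar := by
      rw [Finset.sum_mul, ← Finset.sum_add_distrib]
      exact Finset.sum_congr rfl fun i _ => by ring
    rw [h1, hA, ← hs]; ring
  by_cases hsz : s = 0
  · -- degenerate case: z i = zbar for all i, w = wh
    have hz : ∀ i, z i = zbar := by
      intro i
      have hnn : ∀ j ∈ Finset.univ, (0:ℝ) ≤ wh j * (z j - zbar) ^ 2 := by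
        intro j _; exact mul_nonneg (hwhpos j).le (sq_nonneg _)
      have h0 : ∀ j ∈ Finset.univ, wh j * (z j - zbar) ^ 2 = 0 :=
        (Finset.sum_eq_zero_iff_of_nonneg hnn).mp (by rw [← hs, hsz])
      have := h0 i (Finset.mem_univ i)
      have h2 : (z i - zbar) ^ 2 = 0 := by
        rcases mul_eq_zero.mp this with h | h
        · exact absurd h (ne_of_gt (hwhpos i))
        · exact h
      nlinarith [sq_nonneg (z i - zbar)]
    have hw : ∀ i, w i = wh i := by
      intro i; rw [hwdef i, hz i]; simp
    refine ⟨fun i => by rw [hw i]; exact (hwhpos i).le, ?_, ?_, ?_⟩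
    · rw [Finset.sum_congr rfl fun i _ => hw i]; exact hwhsum
    · have : ∑ i, (w i - wh i) ^ 2 / wh i = 0 := by
        apply Finset.sum_eq_zero; intro i _; rw [hw i]; simp
      rw [this]; positivity
    · rw [hsz, Real.sqrt_zero, Finset.sum_congr rfl fun i _ => by rw [hw i]]
      rw [← hzbar]; ring
  · -- main case: s > 0
    have hspos : 0 < s := lt_of_le_of_ne hs0 (Ne.symm hsz)
    set r := Real.sqrt s with hr
    have hrpos : 0 < r := Real.sqrt_pos.mpr hspos
    have hr2 : r ^ 2 = s := Real.sq_sqrt hs0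
    have hbound : ∀ i, |lam * (z i - zbar)| ≤ r := by
      intro i
      have h1 : (lam * (z i - zbar)) ^ 2 ≤ s := by
        have := hU i
        have habs : (z i - zbar) ^ 2 ≤ U ^ 2 := by
          have := abs_nonneg (z i - zbar)
          nlinarith [sq_abs (z i - zbar)]
        nlinarith [sq_nonneg lam]
      calc |lam * (z i - zbar)| = Real.sqrt ((lam * (z i - zbar)) ^ 2) := by
            rw [Real.sqrt_sq_eq_abs]
        _ ≤ Real.sqrt s := Real.sqrt_le_sqrt h1
    constructor
    · intro i
      rw [hwdef i]
      have h1 : -r ≤ lam * (z i - zbar) := (abs_le.mp (hbound i)).1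
      have h2 : 0 ≤ r + lam * (z i - zbar) := by linarith
      have : wh i + lam * wh i * (z i - zbar) / r
          = wh i * (r + lam * (z i - zbar)) / r := by
        field_simp
      rw [this]
      exact div_nonneg (mul_nonneg (hwhpos i).le h2) hrpos.le
    refine ⟨?_, ?_, ?_⟩
    · rw [Finset.sum_congr rfl fun i _ => hwdef i, Finset.sum_add_distrib, hwhsum]
      have : ∑ i, lam * wh i * (z i - zbar) / r
          = (lam / r) * ∑ i, wh i * (z i - zbar) := by
        rw [Finset.mul_sum]
        exact Finset.sum_congr rfl fun i _ => by field_simp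
      rw [this, hA]; ring
    · have heach : ∀ i, (w i - wh i) ^ 2 / wh i
          = (lam ^ 2 / s) * (wh i * (z i - zbar) ^ 2) := by
        intro i
        rw [hwdef i]
        have hwi := hwhpos i
        rw [← hr2]
        field_simp
        ring
      rw [Finset.sum_congr rfl fun i _ => heach i, ← Finset.mul_sum, ← hs]
      rw [div_mul_cancel₀ _ (ne_of_gt hspos)]
    · have heach : ∀ i, w i * z i
          = wh i * z i + (lam / r) * (wh i * (z i - zbar) * z i) := by
        intro i; rw [hwdef i]; field_simp
      rw [Finset.sum_congr rfl fun i _ => heach i, Finset.sum_add_distrib,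
        ← Finset.mul_sum, hS2, ← hzbar]
      have : lam / r * s = lam * r := by
        rw [← hr2]; field_simp
      rw [this]
end

section
/- Let z ∈ ℝᴺ, ŵ a strictly positive probability vector, z̄ = Σᵢ ŵᵢ zᵢ, s = Σᵢ ŵᵢ (zᵢ − z̄)², and U ≥ max_i |zᵢ − z̄|. Define V(λ) = max { wᵀz : w a probability vector, Σᵢ (wᵢ − ŵᵢ)²/ŵᵢ ≤ λ² }. Then for every λ ≥ 0, z̄ + λ√s − λ²U ≤ V(λ) ≤ z̄ + λ√s. -/
/-- two-sided bound on the distributionally robust value over the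
modified χ² ambiguity set in terms of mean-plus-standard-deviation. -/
theorem chisq_two_sided_bound {N : ℕ} (hN : 0 < N)
    (z wh : Fin N → ℝ) (lam U : ℝ) (hlam : 0 ≤ lam)
    (hwhpos : ∀ i, 0 < wh i) (hwhsum : ∑ i, wh i = 1)
    (zbar s : ℝ)
    (hzbar : zbar = ∑ i, wh i * z i)
    (hs : s = ∑ i, wh i * (z i - zbar) ^ 2)
    (hU : ∀ i, |z i - zbar| ≤ U)
    (S : Set ℝ)
    (hS : S = {v | ∃ w : Fin N → ℝ, (∀ i, 0 ≤ w i) ∧ (∑ i, w i = 1) ∧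
      (∑ i, (w i - wh i) ^ 2 / wh i ≤ lam ^ 2) ∧ v = ∑ i, w i * z i}) :
    zbar + lam * Real.sqrt s - lam ^ 2 * U ≤ sSup S ∧
      sSup S ≤ zbar + lam * Real.sqrt s := by
  have hsnn : 0 ≤ s := by
    rw [hs]
    exact Finset.sum_nonneg fun i _ => mul_nonneg (hwhpos i).le (sq_nonneg _)
  have hUnn : 0 ≤ U := le_trans (abs_nonneg _) (hU ⟨0, hN⟩)
  have hcenter : ∑ i, wh i * (z i - zbar) = 0 := by
    have : ∀ i ∈ Finset.univ, wh i * (z i - zbar) = wh i * z i - zbar * wh i :=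
      fun i _ => by ring
    rw [Finset.sum_congr rfl this, Finset.sum_sub_distrib, ← Finset.mul_sum,
      hwhsum, ← hzbar]
    ring
  -- upper bound on all members of S
  have hub : ∀ v ∈ S, v ≤ zbar + lam * Real.sqrt s := by
    intro v hv
    rw [hS] at hv
    obtain ⟨w, hw0, hw1, hwc, rfl⟩ := hv
    have expand : ∑ i, (w i - wh i) * (z i - zbar) = (∑ i, w i * z i) - zbar := by
      have : ∀ i ∈ Finset.univ, (w i - wh i) * (z i - zbar)
          = (w i * z i - wh i * z i) - zbar * (w i - wh i) := fun i _ => by ring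
      rw [Finset.sum_congr rfl this, Finset.sum_sub_distrib, Finset.sum_sub_distrib,
        ← Finset.mul_sum, Finset.sum_sub_distrib, hw1, hwhsum, ← hzbar]
      ring
    have cs2 : (∑ i, (w i - wh i) * (z i - zbar)) ^ 2
        ≤ (∑ i, (w i - wh i) ^ 2 / wh i) * ∑ i, wh i * (z i - zbar) ^ 2 := by
      have h1 : ∀ i ∈ Finset.univ, (w i - wh i) * (z i - zbar)
          = ((w i - wh i) / Real.sqrt (wh i)) * (Real.sqrt (wh i) * (z i - zbar)) := by
        intro i _
        have h0 : Real.sqrt (wh i) ≠ 0 := ne_of_gt (Real.sqrt_pos.2 (hwhpos i))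
        field_simp
      have h2 : ∀ i ∈ Finset.univ, ((w i - wh i) / Real.sqrt (wh i)) ^ 2
          = (w i - wh i) ^ 2 / wh i := by
        intro i _
        rw [div_pow, Real.sq_sqrt (hwhpos i).le]
      have h3 : ∀ i ∈ Finset.univ, (Real.sqrt (wh i) * (z i - zbar)) ^ 2
          = wh i * (z i - zbar) ^ 2 := by
        intro i _
        rw [mul_pow, Real.sq_sqrt (hwhpos i).le]
      rw [Finset.sum_congr rfl h1, ← Finset.sum_congr rfl h2, ← Finset.sum_congr rfl h3]
      exact Finset.sum_mul_sq_le_sq_mul_sq _ _ _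
    have hbd : ∑ i, (w i - wh i) * (z i - zbar) ≤ lam * Real.sqrt s := by
      have h4 : (∑ i, (w i - wh i) * (z i - zbar)) ^ 2 ≤ (lam * Real.sqrt s) ^ 2 := by
        calc (∑ i, (w i - wh i) * (z i - zbar)) ^ 2
            ≤ (∑ i, (w i - wh i) ^ 2 / wh i) * ∑ i, wh i * (z i - zbar) ^ 2 := cs2
          _ ≤ lam ^ 2 * s := by
              rw [← hs]
              exact mul_le_mul_of_nonneg_right hwc (hs ▸ hsnn)
          _ = (lam * Real.sqrt s) ^ 2 := by
              rw [mul_pow, Real.sq_sqrt hsnn]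
      have hnn : 0 ≤ lam * Real.sqrt s := mul_nonneg hlam (Real.sqrt_nonneg s)
      calc ∑ i, (w i - wh i) * (z i - zbar)
          ≤ |∑ i, (w i - wh i) * (z i - zbar)| := le_abs_self _
        _ = Real.sqrt ((∑ i, (w i - wh i) * (z i - zbar)) ^ 2) :=
            (Real.sqrt_sq_eq_abs _).symm
        _ ≤ Real.sqrt ((lam * Real.sqrt s) ^ 2) := Real.sqrt_le_sqrt h4
        _ = lam * Real.sqrt s := Real.sqrt_sq hnn
    linarith [expand, hbd]
  -- wh itself gives zbar ∈ S
  have hzbarS : zbar ∈ S := by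
    rw [hS]
    refine ⟨wh, fun i => (hwhpos i).le, hwhsum, ?_, hzbar⟩
    simp
    positivity
  have hne : S.Nonempty := ⟨zbar, hzbarS⟩
  have hbdd : BddAbove S := ⟨zbar + lam * Real.sqrt s, hub⟩
  constructor
  · -- lower bound
    by_cases hcase : lam * Real.sqrt s ≤ lam ^ 2 * U
    · have := le_csSup hbdd hzbarS
      linarith
    · push_neg at hcase
      have hlamU : lam * U < Real.sqrt s := by
        rcases eq_or_lt_of_le hlam with h | h
        · exfalso; rw [← h] at hcase; simp at hcase
        · have : lam * (lam * U) < lam * Real.sqrt s := by nlinarith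
          exact lt_of_mul_lt_mul_left this hlam
      have hsqpos : 0 < Real.sqrt s :=
        lt_of_le_of_lt (mul_nonneg hlam hUnn) hlamU
      have hspos : 0 < s := Real.sqrt_pos.mp hsqpos
      set t : ℝ := lam / Real.sqrt s with ht
      have htnn : 0 ≤ t := div_nonneg hlam hsqpos.le
      have htU : t * U ≤ 1 := by
        rw [ht, div_mul_eq_mul_div, div_le_one hsqpos]
        exact (hlamU).le
      set w : Fin N → ℝ := fun i => wh i * (1 + t * (z i - zbar)) with hw
      have hmem : zbar + lam * Real.sqrt s ∈ S := by
        rw [hS]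
        refine ⟨w, ?_, ?_, ?_, ?_⟩
        · intro i
          have h1 : |t * (z i - zbar)| ≤ t * U := by
            rw [abs_mul, abs_of_nonneg htnn]
            exact mul_le_mul_of_nonneg_left (hU i) htnn
          have h2 : -(t * U) ≤ t * (z i - zbar) := neg_le_of_abs_le h1
          have : 0 ≤ 1 + t * (z i - zbar) := by linarith
          exact mul_nonneg (hwhpos i).le this
        · have : ∀ i ∈ Finset.univ, w i = wh i + t * (wh i * (z i - zbar)) :=
            fun i _ => by rw [hw]; ring
          rw [Finset.sum_congr rfl this, Finset.sum_add_distrib, ← Finset.mul_sum,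
            hcenter, hwhsum]
          ring
        · have heq : ∀ i ∈ Finset.univ, (w i - wh i) ^ 2 / wh i
              = t ^ 2 * (wh i * (z i - zbar) ^ 2) := by
            intro i _
            rw [hw]
            have h0 : wh i ≠ 0 := ne_of_gt (hwhpos i)
            field_simp
            ring
          rw [Finset.sum_congr rfl heq, ← Finset.mul_sum, ← hs, ht, div_pow,
            Real.sq_sqrt hsnn]
          rw [div_mul_cancel₀ _ (ne_of_gt hspos)]
        · have heq : ∀ i ∈ Finset.univ, w i * z i
              = wh i * z i + t * (wh i * (z i - zbar) ^ 2) + t * zbar * (wh i * (z i - zbar)) := by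
            intro i _
            rw [hw]
            ring
          rw [Finset.sum_congr rfl heq, Finset.sum_add_distrib, Finset.sum_add_distrib,
            ← Finset.mul_sum, ← Finset.mul_sum, hcenter, ← hs, ← hzbar, ht]
          have hss : Real.sqrt s * Real.sqrt s = s := Real.mul_self_sqrt hsnn
          have hssne : Real.sqrt s ≠ 0 := ne_of_gt hsqpos
          field_simp
          linear_combination lam * hss
      have := le_csSup hbdd hmem
      have hnn : 0 ≤ lam ^ 2 * U := by positivity
      linarith
  · exact csSup_le hne hub
end

section
/- Let z ∈ ℝᴺ, ŵ a strictly positive probability vector, z̄ = Σᵢ ŵᵢ zᵢ, s = Σᵢ ŵᵢ (zᵢ − z̄)², U ≥ max_i |zᵢ − z̄|, and λ ≥ 0. Let P be the polyhedral ambiguity set { w probability vector : Σᵢ |wᵢ − ŵᵢ|/√ŵᵢ ≤ √N λ, max_i |wᵢ − ŵᵢ|/√ŵᵢ ≤ λ }. Then z̄ + λ√s ≤ max_{w ∈ P} wᵀz + λ²U. -/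
/-- the variance-regularized value is bounded by the
distributionally robust value over the polyhedral ambiguity set plus `λ²U`. -/
theorem variance_reg_le_polyhedral_dro {N : ℕ} (hN : 0 < N)
    (z wh : Fin N → ℝ) (lam U : ℝ) (hlam : 0 ≤ lam)
    (hwhpos : ∀ i, 0 < wh i) (hwhsum : ∑ i, wh i = 1)
    (zbar s : ℝ)
    (hzbar : zbar = ∑ i, wh i * z i)
    (hs : s = ∑ i, wh i * (z i - zbar) ^ 2)
    (hU : ∀ i, |z i - zbar| ≤ U)
    (P : Set (Fin N → ℝ))
    (hP : P = {w | (∀ i, 0 ≤ w i) ∧ (∑ i, w i = 1) ∧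
      (∑ i, |w i - wh i| / Real.sqrt (wh i) ≤ Real.sqrt N * lam) ∧
      ∀ i, |w i - wh i| / Real.sqrt (wh i) ≤ lam}) :
    zbar + lam * Real.sqrt s ≤
      sSup ((fun w : Fin N → ℝ => ∑ i, w i * z i) '' P) + lam ^ 2 * U := by
  have hsnn : 0 ≤ s := hs ▸ Finset.sum_nonneg (fun i _ => mul_nonneg (hwhpos i).le (sq_nonneg _))
  have hUnn : 0 ≤ U := le_trans (abs_nonneg _) (hU ⟨0, hN⟩)
  -- boundedness of the image
  have hbdd : BddAbove ((fun w : Fin N → ℝ => ∑ i, w i * z i) '' P) := by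
    refine ⟨∑ i, |z i|, ?_⟩
    rintro x ⟨w, hw, rfl⟩
    rw [hP] at hw
    obtain ⟨h0, h1, -, -⟩ := hw
    calc ∑ i, w i * z i ≤ ∑ i, 1 * |z i| := by
          refine Finset.sum_le_sum (fun i _ => ?_)
          have hwle : w i ≤ 1 := by
            calc w i ≤ ∑ j, w j :=
                Finset.single_le_sum (fun j _ => h0 j) (Finset.mem_univ i)
              _ = 1 := h1
          calc w i * z i ≤ w i * |z i| :=
                mul_le_mul_of_nonneg_left (le_abs_self _) (h0 i)
            _ ≤ 1 * |z i| := mul_le_mul_of_nonneg_right hwle (abs_nonneg _)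
      _ = ∑ i, |z i| := by simp
  have hwhP : wh ∈ P := by
    rw [hP]
    refine ⟨fun i => (hwhpos i).le, hwhsum, ?_, fun i => ?_⟩ <;> simp <;> positivity
  rcases le_or_gt (Real.sqrt s) (lam * U) with hcase | hcase
  · have h1 : zbar ≤ sSup ((fun w : Fin N → ℝ => ∑ i, w i * z i) '' P) :=
      le_csSup hbdd ⟨wh, hwhP, hzbar.symm⟩
    nlinarith [mul_le_mul_of_nonneg_left hcase hlam]
  · -- here lam * U < √s, so s > 0; take the χ² worst-case point
    have hssq : 0 < Real.sqrt s := lt_of_le_of_lt (mul_nonneg hlam hUnn) hcase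
    set σ := Real.sqrt s with hσ
    have hσsq : σ ^ 2 = s := Real.sq_sqrt hsnn
    set w : Fin N → ℝ := fun i => wh i + lam * wh i * (z i - zbar) / σ with hw
    have hΔ0 : ∑ i, wh i * (z i - zbar) = 0 := by
      have : ∑ i, wh i * (z i - zbar) = (∑ i, wh i * z i) - zbar * ∑ i, wh i := by
        rw [Finset.mul_sum, ← Finset.sum_sub_distrib]
        exact Finset.sum_congr rfl (fun i _ => by ring)
      rw [this, hwhsum, hzbar]; ring
    have hΔz : ∑ i, wh i * (z i - zbar) * z i = s := by
      have : ∑ i, wh i * (z i - zbar) * z i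
          = (∑ i, wh i * (z i - zbar) ^ 2) + zbar * ∑ i, wh i * (z i - zbar) := by
        rw [Finset.mul_sum, ← Finset.sum_add_distrib]
        exact Finset.sum_congr rfl (fun i _ => by ring)
      rw [this, hΔ0, hs]; ring
    have hterm : ∀ i, Real.sqrt (wh i) * |z i - zbar| ≤ σ := by
      intro i
      have h1 : Real.sqrt (wh i) * |z i - zbar| = Real.sqrt (wh i * (z i - zbar) ^ 2) := by
        rw [Real.sqrt_mul (hwhpos i).le, Real.sqrt_sq_eq_abs]
      rw [h1, hσ]
      exact Real.sqrt_le_sqrt (hs ▸ Finset.single_le_sum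
        (f := fun j => wh j * (z j - zbar) ^ 2)
        (fun j _ => mul_nonneg (hwhpos j).le (sq_nonneg _)) (Finset.mem_univ i))
    have habs : ∀ i, |w i - wh i| / Real.sqrt (wh i)
        = lam * (Real.sqrt (wh i) * |z i - zbar|) / σ := by
      intro i
      have hwi : Real.sqrt (wh i) > 0 := Real.sqrt_pos.2 (hwhpos i)
      have hwhi : wh i = Real.sqrt (wh i) * Real.sqrt (wh i) :=
        (Real.mul_self_sqrt (hwhpos i).le).symm
      have : w i - wh i = lam * wh i * (z i - zbar) / σ := by rw [hw]; ring
      rw [this, abs_div, abs_of_pos hssq, abs_mul, abs_mul, abs_of_nonneg hlam,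
        abs_of_pos (hwhpos i)]
      rw [hwhi]
      field_simp
      rw [Real.sqrt_sq (Real.sqrt_nonneg _)]; ring
    have hwP : w ∈ P := by
      rw [hP]
      refine ⟨fun i => ?_, ?_, ?_, fun i => ?_⟩
      · -- nonnegativity
        have h1 : lam * |z i - zbar| ≤ lam * U := mul_le_mul_of_nonneg_left (hU i) hlam
        have h2 : lam * (z i - zbar) ≥ -σ := by
          have := neg_abs_le (z i - zbar)
          nlinarith [abs_nonneg (z i - zbar)]
        have : w i = wh i * (σ + lam * (z i - zbar)) / σ := by rw [hw]; field_simp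
        rw [this]
        apply div_nonneg _ hssq.le
        apply mul_nonneg (hwhpos i).le
        linarith
      · -- sums to one
        have : ∑ i, w i = ∑ i, wh i + (lam / σ) * ∑ i, wh i * (z i - zbar) := by
          rw [Finset.mul_sum, ← Finset.sum_add_distrib]
          refine Finset.sum_congr rfl (fun i _ => ?_)
          rw [hw]; field_simp
        rw [this, hΔ0, hwhsum]; ring
      · -- ℓ1-type constraint via Cauchy–Schwarz
        have hCS : (∑ i, Real.sqrt (wh i) * |z i - zbar|) ^ 2 ≤ (N : ℝ) * s := by
          have := Finset.sum_mul_sq_le_sq_mul_sq Finset.univ (fun _ : Fin N => (1 : ℝ))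
            (fun i => Real.sqrt (wh i) * |z i - zbar|)
          simp only [one_mul, one_pow, Finset.sum_const, Finset.card_univ,
            Fintype.card_fin, nsmul_eq_mul, mul_one] at this
          have heq : ∑ i, (Real.sqrt (wh i) * |z i - zbar|) ^ 2
              = ∑ i, wh i * (z i - zbar) ^ 2 := by
            refine Finset.sum_congr rfl (fun i _ => ?_)
            rw [mul_pow, Real.sq_sqrt (hwhpos i).le, sq_abs]
          rw [heq] at this
          rw [← hs] at this
          exact this
        have hsum : ∑ i, Real.sqrt (wh i) * |z i - zbar| ≤ Real.sqrt N * σ := by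
          have hnn : 0 ≤ ∑ i, Real.sqrt (wh i) * |z i - zbar| :=
            Finset.sum_nonneg (fun i _ => mul_nonneg (Real.sqrt_nonneg _) (abs_nonneg _))
          have : Real.sqrt N * σ = Real.sqrt ((N : ℝ) * s) := by
            rw [hσ, ← Real.sqrt_mul (Nat.cast_nonneg N)]
          rw [this]
          exact (Real.le_sqrt hnn (by positivity)).2 hCS
        calc ∑ i, |w i - wh i| / Real.sqrt (wh i)
            = ∑ i, lam * (Real.sqrt (wh i) * |z i - zbar|) / σ := by
              exact Finset.sum_congr rfl (fun i _ => habs i)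
          _ = (lam / σ) * ∑ i, Real.sqrt (wh i) * |z i - zbar| := by
              rw [Finset.mul_sum]
              exact Finset.sum_congr rfl (fun i _ => by ring)
          _ ≤ (lam / σ) * (Real.sqrt N * σ) := by
              apply mul_le_mul_of_nonneg_left hsum (by positivity)
          _ = Real.sqrt N * lam := by field_simp
      · -- ∞-type constraint
        rw [habs i]
        calc lam * (Real.sqrt (wh i) * |z i - zbar|) / σ
            ≤ lam * σ / σ := by
              apply div_le_div_of_nonneg_right ?_ hssq.le
              exact mul_le_mul_of_nonneg_left (hterm i) hlam
          _ = lam := by field_simp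
    have hval : ∑ i, w i * z i = zbar + lam * σ := by
      have : ∑ i, w i * z i
          = ∑ i, wh i * z i + (lam / σ) * ∑ i, wh i * (z i - zbar) * z i := by
        rw [Finset.mul_sum, ← Finset.sum_add_distrib]
        refine Finset.sum_congr rfl (fun i _ => ?_)
        rw [hw]; field_simp
      rw [this, hΔz, ← hzbar]
      rw [← hσsq]
      field_simp
    have h1 : zbar + lam * σ ≤ sSup ((fun w : Fin N → ℝ => ∑ i, w i * z i) '' P) :=
      le_csSup hbdd ⟨w, hwP, hval⟩
    nlinarith [sq_nonneg lam]
end
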